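/- arXiv:2605.01636 — 2 statements merged into one kernel-verified Lean document; each statement's English description precedes it below -/
import Mathlib

section
/- The set of EML-expressible complex numbers equals Chow's field 𝔼 of EL numbers, defined as the intersection of all subfields of ℂ closed under exp and the principal-branch log (applied to nonzero elements). -/
inductive Expr : Type
  | one : Expr
  | E : Expr → Expr → Expr

open Classical in
noncomputable def eval : Expr → Option ℂ
  | Expr.one => some 1
  | Expr.E a b =>
    match eval a, eval b with
    | some x, some y => if y = 0 then none else some (Complex.exp x - Complex.log y)
    | _, _ => none

def ExpLogClosed (F : Subfield ℂ) : Prop :=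
  (∀ x ∈ F, Complex.exp x ∈ F) ∧ (∀ x ∈ F, x ≠ 0 → Complex.log x ∈ F)


/-!
Write `S` for the set of EML values. Every exp-log closed field contains `S`, by induction on
expressions. Conversely `S` is itself an exp-log closed subfield. Since `E(x, 1) = exp x` and
`E(log x, exp y) = x - y` whenever `log x ∈ S` and `-π < Im y ≤ π`, the work lies in the branch
cut of `log`. One gets `log` on the slit plane first, then `-πi` and `πi`, then `log` everywhere
through `log y = log (-y) + πi` on the negative axis, and finally translations by integer
multiples of `πi`; these remove the restriction on `Im y`, since `y - log (exp y) ∈ 2πiℤ`.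
-/

open Complex
open scoped Real

namespace Complex

theorem mem_slitPlane_of_im_ne_zero {z : ℂ} (hz : z.im ≠ 0) : z ∈ slitPlane :=
  mem_slitPlane_iff.2 (Or.inr hz)

theorem log_im_lt_pi_of_mem_slitPlane {z : ℂ} (hz : z ∈ slitPlane) : (log z).im < π :=
  log_im z ▸ lt_of_le_of_ne (arg_le_pi z) (slitPlane_arg_ne_pi hz)

theorem log_eq_log_neg_add_pi_mul_I {z : ℂ} (hz : z ∉ slitPlane) (hz0 : z ≠ 0) :
    log z = log (-z) + π * I := by
  have harg : z.arg = π := by simpa [mem_slitPlane_iff_arg, hz0] using hz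
  have harg_neg : (-z).arg = 0 := by
    rw [arg_neg_eq_arg_sub_pi_iff.2 (Or.inr ⟨(arg_eq_pi_iff.1 harg).2, (arg_eq_pi_iff.1 harg).1⟩),
      harg, sub_self]
  apply Complex.ext <;> simp [log_re, log_im, harg, harg_neg]

theorem exp_one_re : (exp 1).re = Real.exp 1 := by simpa using exp_ofReal_re 1

theorem exp_one_im : (exp 1).im = 0 := by simpa using exp_ofReal_im 1

theorem neg_pi_mul_I_mem_slitPlane : -(π * I) ∈ slitPlane :=
  mem_slitPlane_of_im_ne_zero (by simp [Real.pi_ne_zero])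

theorem log_neg_pi_mul_I_im : (log (-(π * I))).im = -(π / 2) := by
  rw [log_im, show -((π : ℂ) * I) = (π : ℝ) * -I by ring, arg_real_mul _ Real.pi_pos, arg_neg_I]

theorem neg_pi_mul_I_sub_log_im : (-(π * I) - log (-(π * I))).im = -(π / 2) := by
  rw [sub_im, log_neg_pi_mul_I_im]
  simp
  ring

end Complex

theorem abs_neg_pi_div_two_lt_pi : |-(π / 2)| < π := by
  rw [abs_neg, abs_of_pos Real.pi_div_two_pos]
  linarith [Real.pi_pos]

theorem eval_E_eq_some {a b : Expr} {z : ℂ} :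
    eval (Expr.E a b) = some z ↔
      ∃ x y, eval a = some x ∧ eval b = some y ∧ y ≠ 0 ∧ exp x - log y = z := by
  rw [eval]
  rcases eval a with _ | x <;> rcases eval b with _ | y <;> simp

theorem ExpLogClosed.mem_of_eval_eq_some {F : Subfield ℂ} (hF : ExpLogClosed F) {e : Expr}
    {z : ℂ} (he : eval e = some z) : z ∈ F := by
  induction e generalizing z with
  | one => cases he; exact F.one_mem
  | E a b iha ihb =>
    obtain ⟨x, y, ha, hb, hy0, rfl⟩ := eval_E_eq_some.1 he
    exact F.sub_mem (hF.1 x (iha ha)) (hF.2 y (ihb hb) hy0)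

def emlNumbers : Set ℂ := {z | ∃ e : Expr, eval e = some z}

namespace emlNumbers

variable {x y : ℂ}

theorem one_mem : (1 : ℂ) ∈ emlNumbers := ⟨Expr.one, rfl⟩

theorem exp_sub_log_mem (hx : x ∈ emlNumbers) (hy : y ∈ emlNumbers) (hy0 : y ≠ 0) :
    exp x - log y ∈ emlNumbers := by
  obtain ⟨a, ha⟩ := hx
  obtain ⟨b, hb⟩ := hy
  exact ⟨Expr.E a b, eval_E_eq_some.2 ⟨x, y, ha, hb, hy0, rfl⟩⟩

theorem exp_mem (hx : x ∈ emlNumbers) : exp x ∈ emlNumbers := by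
  simpa using exp_sub_log_mem hx one_mem one_ne_zero

theorem exp_sub_mem (hx : x ∈ emlNumbers) (hy : y ∈ emlNumbers) (hy₁ : -π < y.im)
    (hy₂ : y.im ≤ π) : exp x - y ∈ emlNumbers := by
  simpa [log_exp hy₁ hy₂] using exp_sub_log_mem hx (exp_mem hy) (exp_ne_zero y)

theorem zero_mem : (0 : ℂ) ∈ emlNumbers := by
  simpa using exp_sub_mem one_mem (exp_mem one_mem) (by simp [exp_one_im, Real.pi_pos])
    (by simp [exp_one_im, Real.pi_pos.le])

theorem log_mem_of_mem_slitPlane (hx : x ∈ emlNumbers) (hxs : x ∈ slitPlane) :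
    log x ∈ emlNumbers := by
  have h_lt := log_im_lt_pi_of_mem_slitPlane hxs
  have h_gt := neg_pi_lt_log_im x
  simpa using exp_sub_mem zero_mem (exp_sub_log_mem zero_mem hx (slitPlane_ne_zero hxs))
    (by simp; linarith) (by simp; linarith)

theorem sub_mem_of_mem_slitPlane (hx : x ∈ emlNumbers) (hxs : x ∈ slitPlane)
    (hy : y ∈ emlNumbers) (hy₁ : -π < y.im) (hy₂ : y.im ≤ π) : x - y ∈ emlNumbers := by
  simpa [exp_log (slitPlane_ne_zero hxs)] using
    exp_sub_mem (log_mem_of_mem_slitPlane hx hxs) hy hy₁ hy₂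

/-- `-πi = (1 - log (-y)) - (1 - log y)`, and `1 - log (-y)` is an `E`-value although `-y` lies
on the branch cut. -/
theorem neg_pi_mul_I_mem_of_mem_slitPlane (hy : y ∈ emlNumbers) (hny : -y ∈ emlNumbers)
    (hys : y ∈ slitPlane) (hnys : -y ∉ slitPlane) : -(π * I) ∈ emlNumbers := by
  have hy0 : y ≠ 0 := slitPlane_ne_zero hys
  have hu : 1 - log y ∈ emlNumbers := by simpa using exp_sub_log_mem zero_mem hy hy0
  have hv : 1 - log y - π * I ∈ emlNumbers := by
    have h := exp_sub_log_mem zero_mem hny (neg_ne_zero.2 hy0)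
    rwa [log_eq_log_neg_add_pi_mul_I hnys (neg_ne_zero.2 hy0), neg_neg, exp_zero,
      ← sub_sub] at h
  have h_lt := log_im_lt_pi_of_mem_slitPlane hys
  have h_gt := neg_pi_lt_log_im y
  simpa using sub_mem_of_mem_slitPlane hv
    (mem_slitPlane_of_im_ne_zero (ne_of_lt (by simp; linarith))) hu
    (by simp; linarith) (by simp; linarith)

theorem neg_pi_mul_I_mem : -(π * I) ∈ emlNumbers := by
  refine neg_pi_mul_I_mem_of_mem_slitPlane (y := exp 1 - 1) ?_ ?_ ?_ ?_
  · exact sub_mem_of_mem_slitPlane (exp_mem one_mem)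
      (by simp [mem_slitPlane_iff, exp_one_re, Real.exp_pos]) one_mem
      (by simp [Real.pi_pos]) (by simp [Real.pi_pos.le])
  · simpa using sub_mem_of_mem_slitPlane one_mem one_mem_slitPlane (exp_mem one_mem)
      (by simp [exp_one_im, Real.pi_pos]) (by simp [exp_one_im, Real.pi_pos.le])
  · simp [mem_slitPlane_iff, exp_one_re]
  · simp [mem_slitPlane_iff, exp_one_re, exp_one_im]

theorem neg_one_mem : (-1 : ℂ) ∈ emlNumbers := by
  simpa [exp_neg, exp_pi_mul_I] using exp_mem neg_pi_mul_I_mem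

theorem two_mem : (2 : ℂ) ∈ emlNumbers := by
  convert sub_mem_of_mem_slitPlane one_mem one_mem_slitPlane neg_one_mem
    (by simp [Real.pi_pos]) (by simp [Real.pi_pos.le]) using 1
  norm_num

theorem neg_mem_of_abs_im_lt_pi (hy : y ∈ emlNumbers) (hy_im : |y.im| < π) :
    -y ∈ emlNumbers := by
  obtain ⟨h₁, h₂⟩ := abs_lt.1 hy_im
  have h_one_sub : 1 - y ∈ emlNumbers :=
    sub_mem_of_mem_slitPlane one_mem one_mem_slitPlane hy h₁ h₂.le
  have h_one_add : 2 - (1 - y) ∈ emlNumbers :=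
    sub_mem_of_mem_slitPlane two_mem (ofNat_mem_slitPlane 2) h_one_sub
      (by simp; linarith) (by simp; linarith)
  convert sub_mem_of_mem_slitPlane one_mem one_mem_slitPlane h_one_add
    (by simp; linarith) (by simp; linarith) using 1
  ring

theorem neg_pi_mul_I_sub_log_mem : -(π * I) - log (-(π * I)) ∈ emlNumbers :=
  sub_mem_of_mem_slitPlane neg_pi_mul_I_mem neg_pi_mul_I_mem_slitPlane
    (log_mem_of_mem_slitPlane neg_pi_mul_I_mem neg_pi_mul_I_mem_slitPlane)
    (neg_pi_lt_log_im _) (log_im_le_pi _)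

theorem pi_mul_I_mem : π * I ∈ emlNumbers := by
  have hw := neg_mem_of_abs_im_lt_pi neg_pi_mul_I_sub_log_mem
    (by rw [neg_pi_mul_I_sub_log_im]; exact abs_neg_pi_div_two_lt_pi)
  convert sub_mem_of_mem_slitPlane hw
    (mem_slitPlane_of_im_ne_zero (by
      rw [neg_im, neg_pi_mul_I_sub_log_im, neg_neg]; exact Real.pi_div_two_pos.ne'))
    (log_mem_of_mem_slitPlane neg_pi_mul_I_mem neg_pi_mul_I_mem_slitPlane)
    (neg_pi_lt_log_im _) (log_im_le_pi _) using 1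
  ring

theorem log_mem (hy : y ∈ emlNumbers) (hy0 : y ≠ 0) : log y ∈ emlNumbers := by
  by_cases hys : y ∈ slitPlane
  · exact log_mem_of_mem_slitPlane hy hys
  have hy_im : y.im = 0 := by simp_all [mem_slitPlane_iff]
  have hnys : -y ∈ slitPlane := (mem_slitPlane_or_neg_mem_slitPlane hy0).resolve_left hys
  have hny := neg_mem_of_abs_im_lt_pi hy (by simp [hy_im, Real.pi_pos])
  have h_lt := log_im_lt_pi_of_mem_slitPlane hnys
  have h_gt := neg_pi_lt_log_im (-y)
  have hnl := neg_mem_of_abs_im_lt_pi (log_mem_of_mem_slitPlane hny hnys) (abs_lt.2 ⟨h_gt, h_lt⟩)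
  rw [log_eq_log_neg_add_pi_mul_I hys hy0]
  convert sub_mem_of_mem_slitPlane pi_mul_I_mem
    (mem_slitPlane_of_im_ne_zero (by simp [Real.pi_ne_zero])) hnl
    (by rw [neg_im]; linarith) (by rw [neg_im]; linarith) using 1
  ring

theorem sub_log_mem (hx : x ∈ emlNumbers) (hx0 : x ≠ 0) (hy : y ∈ emlNumbers) (hy0 : y ≠ 0) :
    x - log y ∈ emlNumbers := by
  simpa [exp_log hx0] using exp_sub_log_mem (log_mem hx hx0) hy hy0

theorem sub_mem_of_ne_zero (hx : x ∈ emlNumbers) (hx0 : x ≠ 0) (hy : y ∈ emlNumbers)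
    (hy₁ : -π < y.im) (hy₂ : y.im ≤ π) : x - y ∈ emlNumbers := by
  simpa [exp_log hx0] using exp_sub_mem (log_mem hx hx0) hy hy₁ hy₂

theorem sub_pi_mul_I_mem (hx : x ∈ emlNumbers) : x - π * I ∈ emlNumbers := by
  by_cases hx0 : x = 0
  · simpa [hx0] using neg_pi_mul_I_mem
  · simpa [log_neg_one] using sub_log_mem hx hx0 neg_one_mem (by norm_num)

/-- `x + πi = (x - w) - log (-πi)` with `w = -πi - log (-πi)`; both `w` and `log (-πi)` have
imaginary part `-π/2`, so neither subtraction meets the branch cut. -/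
theorem add_pi_mul_I_mem (hx : x ∈ emlNumbers) : x + π * I ∈ emlNumbers := by
  have hw_im := neg_pi_mul_I_sub_log_im
  have hxw : x - (-(π * I) - log (-(π * I))) ∈ emlNumbers := by
    by_cases hx0 : x = 0
    · simpa [hx0] using neg_mem_of_abs_im_lt_pi neg_pi_mul_I_sub_log_mem
        (by rw [hw_im]; exact abs_neg_pi_div_two_lt_pi)
    · exact sub_mem_of_ne_zero hx hx0 neg_pi_mul_I_sub_log_mem
        (by rw [hw_im]; linarith [Real.pi_pos]) (by rw [hw_im]; linarith [Real.pi_pos])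
  have hne : -(π * I) ≠ 0 := slitPlane_ne_zero neg_pi_mul_I_mem_slitPlane
  rw [show x + π * I = x - (-(π * I) - log (-(π * I))) - log (-(π * I)) by ring]
  by_cases hxw0 : x - (-(π * I) - log (-(π * I))) = 0
  · rw [hxw0, zero_sub]
    exact neg_mem_of_abs_im_lt_pi (log_mem neg_pi_mul_I_mem hne)
      (by rw [log_neg_pi_mul_I_im]; exact abs_neg_pi_div_two_lt_pi)
  · exact sub_log_mem hxw hxw0 neg_pi_mul_I_mem hne

theorem add_int_mul_pi_mul_I_mem (hx : x ∈ emlNumbers) (n : ℤ) :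
    x + n * (π * I) ∈ emlNumbers := by
  induction n using Int.induction_on with
  | zero => simpa using hx
  | succ n ih =>
    convert add_pi_mul_I_mem ih using 1
    push_cast; ring
  | pred n ih =>
    convert sub_pi_mul_I_mem ih using 1
    push_cast; ring

theorem sub_mem (hx : x ∈ emlNumbers) (hy : y ∈ emlNumbers) : x - y ∈ emlNumbers := by
  obtain ⟨n, hn⟩ := exp_eq_exp_iff_exists_int.1 (exp_log (exp_ne_zero y))
  have hsub : ∀ {x}, x ∈ emlNumbers → x ≠ 0 → x - y ∈ emlNumbers := by
    intro x hx hx0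
    convert add_int_mul_pi_mul_I_mem (sub_log_mem hx hx0 (exp_mem hy) (exp_ne_zero y)) (2 * n)
      using 1
    rw [hn]; push_cast; ring
  by_cases hx0 : x = 0
  · convert add_int_mul_pi_mul_I_mem (hsub pi_mul_I_mem (by simp [Real.pi_ne_zero])) (-1)
      using 1
    rw [hx0]; push_cast; ring
  · exact hsub hx hx0

theorem neg_mem (hx : x ∈ emlNumbers) : -x ∈ emlNumbers := by
  simpa using sub_mem zero_mem hx

theorem add_mem (hx : x ∈ emlNumbers) (hy : y ∈ emlNumbers) : x + y ∈ emlNumbers := by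
  simpa using sub_mem hx (neg_mem hy)

theorem mul_mem (hx : x ∈ emlNumbers) (hy : y ∈ emlNumbers) : x * y ∈ emlNumbers := by
  rcases eq_or_ne x 0 with rfl | hx0
  · simpa using zero_mem
  rcases eq_or_ne y 0 with rfl | hy0
  · simpa using zero_mem
  simpa [exp_add, exp_log hx0, exp_log hy0] using
    exp_mem (add_mem (log_mem hx hx0) (log_mem hy hy0))

theorem inv_mem (hx : x ∈ emlNumbers) : x⁻¹ ∈ emlNumbers := by
  rcases eq_or_ne x 0 with rfl | hx0
  · simpa using zero_mem
  simpa [exp_neg, exp_log hx0] using exp_mem (neg_mem (log_mem hx hx0))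

end emlNumbers

def emlSubfield : Subfield ℂ where
  carrier := emlNumbers
  mul_mem' := emlNumbers.mul_mem
  one_mem' := emlNumbers.one_mem
  add_mem' := emlNumbers.add_mem
  zero_mem' := emlNumbers.zero_mem
  neg_mem' := emlNumbers.neg_mem
  inv_mem' _ := emlNumbers.inv_mem

theorem expLogClosed_emlSubfield : ExpLogClosed emlSubfield :=
  ⟨fun _ => emlNumbers.exp_mem, fun _ => emlNumbers.log_mem⟩

theorem eml_eq_el :
    {z : ℂ | ∃ e : Expr, eval e = some z} =
      {z : ℂ | ∀ F : Subfield ℂ, ExpLogClosed F → z ∈ F} := by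
  ext z
  exact ⟨fun ⟨_, he⟩ _ hF => hF.mem_of_eval_eq_some he,
    fun h => h emlSubfield expLogClosed_emlSubfield⟩
end

section
/- The smallest subset of ℂ containing 1 and closed under the map (α, β) ↦ exp(α) − log(β) for β ≠ 0 is a subfield of ℂ; in particular it contains 0, is closed under addition, negation, multiplication, and inversion of nonzero elements. -/
inductive EMLSet : ℂ → Prop
  | one : EMLSet 1
  | E : ∀ a b : ℂ, EMLSet a → EMLSet b → b ≠ 0 →
      EMLSet (Complex.exp a - Complex.log b)

namespace EMLAux

open Complex Real

lemma mem_exp {x : ℂ} (hx : EMLSet x) : EMLSet (Complex.exp x) := by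
  have h := EMLSet.E x 1 hx EMLSet.one one_ne_zero
  simpa using h

lemma mem_zero : EMLSet 0 := by
  have h := EMLSet.E 1 (Complex.exp (Complex.exp 1)) EMLSet.one
    (mem_exp (mem_exp EMLSet.one)) (Complex.exp_ne_zero _)
  rw [Complex.log_exp (by simp [Complex.exp_im]; positivity)
    (by simp [Complex.exp_im]; exact Real.pi_pos.le)] at h
  simpa using h

lemma ne_zero_of_cond {x : ℂ} (h : x.im ≠ 0 ∨ 0 < x.re) : x ≠ 0 := by
  rintro rfl
  simp at h

lemma arg_lt_pi_of {x : ℂ} (h : x.im ≠ 0 ∨ 0 < x.re) : x.arg < Real.pi := by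
  rcases (Complex.arg_le_pi x).lt_or_eq with h' | h'
  · exact h'
  · exfalso
    obtain ⟨h1, h2⟩ := Complex.arg_eq_pi_iff.mp h'
    rcases h with h | h
    · exact h h2
    · linarith

lemma log_mem {x : ℂ} (hx : EMLSet x) (h : x.im ≠ 0 ∨ 0 < x.re) :
    EMLSet (Complex.log x) := by
  have hx0 : x ≠ 0 := ne_zero_of_cond h
  have h1 : EMLSet (1 - Complex.log x) := by
    have := EMLSet.E 0 x mem_zero hx hx0
    simpa using this
  have h2 := EMLSet.E 0 (Complex.exp (1 - Complex.log x)) mem_zero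
    (mem_exp h1) (Complex.exp_ne_zero _)
  rw [Complex.log_exp (by simp [Complex.log_im]; exact arg_lt_pi_of h)
    (by simp [Complex.log_im]; linarith [Complex.neg_pi_lt_arg x])] at h2
  have h3 : Complex.exp 0 - (1 - Complex.log x) = Complex.log x := by
    rw [Complex.exp_zero]; ring
  rwa [h3] at h2

lemma sub_log {u b : ℂ} (hu : EMLSet u) (h : u.im ≠ 0 ∨ 0 < u.re)
    (hb : EMLSet b) (hb0 : b ≠ 0) : EMLSet (u - Complex.log b) := by
  have := EMLSet.E (Complex.log u) b (log_mem hu h) hb hb0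
  rwa [Complex.exp_log (ne_zero_of_cond h)] at this

lemma neg_real_mem {x : ℂ} (hx : EMLSet x) (him : x.im = 0) : EMLSet (-x) := by
  have hw : EMLSet (Complex.exp x - x) := by
    have := EMLSet.E x (Complex.exp x) hx (mem_exp hx) (Complex.exp_ne_zero _)
    rwa [Complex.log_exp (by rw [him]; linarith [Real.pi_pos]) (by rw [him]; exact Real.pi_pos.le)]
      at this
  have hwre : 0 < (Complex.exp x - x).re := by
    simp only [Complex.sub_re, Complex.exp_re, him, Real.cos_zero, mul_one, sub_pos]
    linarith [Real.add_one_le_exp x.re]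
  have h2 := sub_log hw (Or.inr hwre) (mem_exp (mem_exp hx)) (Complex.exp_ne_zero _)
  rw [Complex.log_exp (by simp [Complex.exp_im, him]; positivity)
    (by simp [Complex.exp_im, him]; exact Real.pi_pos.le)] at h2
  rwa [show Complex.exp x - x - Complex.exp x = -x from by ring] at h2

lemma neg_mem {x : ℂ} (hx : EMLSet x) : EMLSet (-x) := by
  by_cases him : x.im = 0
  · exact neg_real_mem hx him
  · have hx0 : x ≠ 0 := ne_zero_of_cond (Or.inl him)
    have hl := log_mem hx (Or.inl him)
    have hlim : (Complex.log x).im ≠ 0 := by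
      rw [Complex.log_im]
      intro h
      exact him (Complex.arg_eq_zero_iff.mp h).2
    have hm1 : EMLSet (-1 : ℂ) := by
      simpa using neg_real_mem EMLSet.one (by simp)
    have ha := sub_log hl (Or.inl hlim) hm1 (by norm_num)
    rw [Complex.log_neg_one] at ha
    have hfin := mem_exp ha
    rwa [Complex.exp_sub, Complex.exp_log hx0, Complex.exp_pi_mul_I,
      show x / (-1 : ℂ) = -x from by ring] at hfin

lemma pi_I_mem : EMLSet ((Real.pi : ℂ) * Complex.I) := by
  have hm1 : EMLSet (-1 : ℂ) := by
    simpa using neg_real_mem EMLSet.one (by simp)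
  have h1 : EMLSet (1 - (Real.pi : ℂ) * Complex.I) := by
    have := EMLSet.E 0 (-1) mem_zero hm1 (by norm_num)
    rwa [Complex.exp_zero, Complex.log_neg_one] at this
  have him : (1 - (Real.pi : ℂ) * Complex.I).im ≠ 0 := by
    simp [Real.pi_ne_zero]
  have h2 := sub_log h1 (Or.inl him) (mem_exp EMLSet.one) (Complex.exp_ne_zero _)
  rw [Complex.log_exp (by simp; positivity) (by simp; exact Real.pi_pos.le)] at h2
  have := neg_mem h2
  rwa [show -(1 - (Real.pi : ℂ) * Complex.I - 1) = (Real.pi : ℂ) * Complex.I from by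
    ring] at this

lemma exists_log {x : ℂ} (hx : EMLSet x) (hx0 : x ≠ 0) :
    ∃ a : ℂ, EMLSet a ∧ Complex.exp a = x ∧ -Real.pi ≤ a.im ∧ a.im < Real.pi := by
  by_cases h : x.im ≠ 0 ∨ 0 < x.re
  · refine ⟨Complex.log x, log_mem hx h, Complex.exp_log hx0, ?_, ?_⟩
    · rw [Complex.log_im]; exact (Complex.neg_pi_lt_arg x).le
    · rw [Complex.log_im]; exact arg_lt_pi_of h
  · push_neg at h
    obtain ⟨him, hre⟩ := h
    have hre' : x.re < 0 := by
      rcases hre.lt_or_eq with h' | h'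
      · exact h'
      · exfalso; exact hx0 (Complex.ext h' him)
    have hnx : EMLSet (-x) := neg_real_mem hx him
    have hnxre : 0 < (-x).re := by simp; linarith
    have hl := log_mem hnx (Or.inr hnxre)
    have hlim : (Complex.log (-x)).im = 0 := by
      rw [Complex.log_im]
      exact Complex.arg_eq_zero_iff.mpr ⟨hnxre.le, by simp [him]⟩
    have hpiim : ((Real.pi : ℂ) * Complex.I).im ≠ 0 := by simp [Real.pi_ne_zero]
    have hu := sub_log pi_I_mem (Or.inl hpiim) (mem_exp hl) (Complex.exp_ne_zero _)
    rw [Complex.log_exp (by rw [hlim]; linarith [Real.pi_pos]) (by rw [hlim]; exact Real.pi_pos.le)]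
      at hu
    have ha := neg_mem hu
    rw [show -((Real.pi : ℂ) * Complex.I - Complex.log (-x)) =
      Complex.log (-x) - (Real.pi : ℂ) * Complex.I from by ring] at ha
    refine ⟨Complex.log (-x) - (Real.pi : ℂ) * Complex.I, ha, ?_, ?_, ?_⟩
    · rw [Complex.exp_sub, Complex.exp_log (neg_ne_zero.mpr hx0), Complex.exp_pi_mul_I]
      ring
    · simp [hlim]
    · simp only [Complex.sub_im, hlim]
      simp
      positivity
  
lemma inv_mem {x : ℂ} (hx : EMLSet x) (hx0 : x ≠ 0) : EMLSet x⁻¹ := by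
  obtain ⟨a, ha, hexp, _, _⟩ := exists_log hx hx0
  have := mem_exp (neg_mem ha)
  rwa [Complex.exp_neg, hexp] at this

lemma add_of {a b : ℂ} (ha : EMLSet a) (hb : EMLSet b)
    (hcond : a.im ≠ 0 ∨ 0 < a.re) (h1 : -Real.pi ≤ b.im) (h2 : b.im < Real.pi) :
    EMLSet (a + b) := by
  have hnb := neg_mem hb
  have h := sub_log ha hcond (mem_exp hnb) (Complex.exp_ne_zero _)
  rw [Complex.log_exp (by simp; linarith) (by simp; linarith)] at h
  rwa [sub_neg_eq_add] at h

lemma mul_mem {x y : ℂ} (hx : EMLSet x) (hy : EMLSet y) : EMLSet (x * y) := by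
  rcases eq_or_ne x 0 with rfl | hx0
  · simpa using mem_zero
  rcases eq_or_ne y 0 with rfl | hy0
  · simpa using mem_zero
  obtain ⟨a, ha, hae, ha1, ha2⟩ := exists_log hx hx0
  obtain ⟨b, hb, hbe, hb1, hb2⟩ := exists_log hy hy0
  have key : EMLSet (a + b) := by
    by_cases hca : a.im ≠ 0 ∨ 0 < a.re
    · exact add_of ha hb hca hb1 hb2
    · push_neg at hca
      by_cases hcb : b.im ≠ 0 ∨ 0 < b.re
      · rw [add_comm]
        exact add_of hb ha hcb (by rw [hca.1]; linarith [Real.pi_pos])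
          (by rw [hca.1]; exact Real.pi_pos)
      · push_neg at hcb
        rcases hca.2.lt_or_eq with hra | hra
        · rcases hcb.2.lt_or_eq with hrb | hrb
          · have hna := neg_real_mem ha hca.1
            have ht := sub_log hna (Or.inr (by simp; linarith)) (mem_exp hb)
              (Complex.exp_ne_zero _)
            rw [Complex.log_exp (by rw [hcb.1]; linarith [Real.pi_pos])
              (by rw [hcb.1]; exact Real.pi_pos.le)] at ht
            have := neg_mem ht
            rwa [show -(-a - b) = a + b from by ring] at this
          · have hb0 : b = 0 := by apply Complex.ext <;> simp [← hrb, hcb.1]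
            rw [hb0, add_zero]; exact ha
        · have ha0 : a = 0 := by apply Complex.ext <;> simp [← hra, hca.1]
          rw [ha0, zero_add]; exact hb
  have := mem_exp key
  rwa [Complex.exp_add, hae, hbe] at this

lemma add_one_mem {z : ℂ} (hz : EMLSet z) : EMLSet (z + 1) := by
  by_cases h : z.im ≠ 0 ∨ 0 < z.re
  · have hm1 : EMLSet (-1 : ℂ) := by
      simpa using neg_real_mem EMLSet.one (by simp)
    have hh := sub_log hz h (mem_exp hm1) (Complex.exp_ne_zero _)
    rw [Complex.log_exp (by simp; positivity) (by simp; exact Real.pi_pos.le)] at hh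
    rwa [sub_neg_eq_add] at hh
  · push_neg at h
    rcases h.2.lt_or_eq with hre | hre
    · have hnz := neg_real_mem hz h.1
      have hw := sub_log hnz (Or.inr (by simp; linarith)) (mem_exp EMLSet.one)
        (Complex.exp_ne_zero _)
      rw [Complex.log_exp (by simp; positivity) (by simp; exact Real.pi_pos.le)] at hw
      have := neg_mem hw
      rwa [show -(-z - 1) = z + 1 from by ring] at this
    · have hz0 : z = 0 := by apply Complex.ext <;> simp [← hre, h.1]
      rw [hz0, zero_add]; exact EMLSet.one

lemma add_mem {x y : ℂ} (hx : EMLSet x) (hy : EMLSet y) : EMLSet (x + y) := by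
  rcases eq_or_ne x 0 with rfl | hx0
  · simpa using hy
  have h1 : EMLSet (x⁻¹ * y) := mul_mem (inv_mem hx hx0) hy
  have h2 : EMLSet (x⁻¹ * y + 1) := add_one_mem h1
  have h3 := mul_mem hx h2
  rwa [show x * (x⁻¹ * y + 1) = x + y from by field_simp; ring] at h3

end EMLAux

theorem eml_set_is_subfield :
    EMLSet 0 ∧
    (∀ x y : ℂ, EMLSet x → EMLSet y → EMLSet (x + y)) ∧
    (∀ x : ℂ, EMLSet x → EMLSet (-x)) ∧
    (∀ x y : ℂ, EMLSet x → EMLSet y → EMLSet (x * y)) ∧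
    (∀ x : ℂ, EMLSet x → x ≠ 0 → EMLSet x⁻¹) :=
  ⟨EMLAux.mem_zero,
   fun _ _ hx hy => EMLAux.add_mem hx hy,
   fun _ hx => EMLAux.neg_mem hx,
   fun _ _ hx hy => EMLAux.mul_mem hx hy,
   fun _ hx h0 => EMLAux.inv_mem hx h0⟩
end
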